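/- arXiv:2303.06332 — 3 statements merged into one kernel-verified Lean document; each statement's English description precedes it below -/
import Mathlib

section
/- Under consistency, unconfoundedness, exclusion restriction for both potential outcomes, and positivity, the differential-effect contrast satisfies μ1 := E[Y|Z1=1,Z2=0] − E[Y|Z1=0,Z2=1] = τ + h(1,0) − h(0,1), where τ = E[Y(1) − Y(0)] and h(a,b) = E[f_a(X,U) | Z1=a, Z2=b] with f_a(X,U) = E[Y(a)|X,U] − E[Y(a)]. -/
open MeasureTheory ProbabilityTheory

/-- Conditional mean of `f` given the event `A`: `E[f | A]`. -/
noncomputable def condMeanOn {Ω : Type*} [MeasurableSpace Ω]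
    (μ : Measure Ω) (A : Set Ω) (f : Ω → ℝ) : ℝ :=
  (∫ ω in A, f ω ∂μ) / (μ A).toReal

/-- The σ-algebra generated by two real-valued functions, e.g. `σ(X, U)`. -/
def sigma2 {Ω : Type*} (f g : Ω → ℝ) : MeasurableSpace Ω :=
  MeasurableSpace.comap f inferInstance ⊔ MeasurableSpace.comap g inferInstance

/-- The σ-algebra generated by three real-valued functions, e.g. `σ(Z2, X, U)`. -/
def sigma3 {Ω : Type*} (f g h : Ω → ℝ) : MeasurableSpace Ω :=
  MeasurableSpace.comap f inferInstance ⊔ MeasurableSpace.comap g inferInstance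
    ⊔ MeasurableSpace.comap h inferInstance

/-! Conditioning on `σ(Z2, X, U)` and using that `Z1` is conditionally independent of the
potential outcomes, `E[Y(a); Z1 = a, Z2 = b] = E[E[Y(a) | Z2, X, U]; Z1 = a, Z2 = b]`, and by the
exclusion restriction the inner conditional expectation is `E[Y(a) | X, U]`. Hence the two cell
means of `Y` are the cell means of `E[Y(1) | X, U]` and `E[Y(0) | X, U]`; centring these at
`E[Y(1)]` and `E[Y(0)]` produces `τ`.

The factorisation `E[Y(a) 1{Z1 ∈ t} | m] = E[Y(a) | m] P(Z1 ∈ t | m)` behind the first step holds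
because `Y(a)` and `Z1` are independent under almost every measure `condExpKernel μ m ω`. -/

theorem mul_indicator_one_eq_indicator {α M : Type*} [MulZeroOneClass M] (s : Set α)
    (f : α → M) : f * s.indicator 1 = s.indicator f := by
  ext x
  by_cases hx : x ∈ s <;> simp [hx]

theorem condMeanOn_sub_const {Ω : Type*} [MeasurableSpace Ω] {μ : Measure Ω}
    [IsFiniteMeasure μ] {A : Set Ω} (hA : μ A ≠ 0) {f : Ω → ℝ} (hf : IntegrableOn f A μ)
    (c : ℝ) :
    condMeanOn μ A (fun ω => f ω - c) = condMeanOn μ A f - c := by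
  have hA' : μ.real A ≠ 0 := (ENNReal.toReal_pos hA (measure_ne_top μ A)).ne'
  change (∫ ω in A, (f ω - c) ∂μ) / μ.real A = (∫ ω in A, f ω ∂μ) / μ.real A - c
  rw [integral_sub hf (integrableOn_const (measure_ne_top μ A)), setIntegral_const, smul_eq_mul]
  field_simp

namespace ProbabilityTheory

variable {Ω β β' : Type*} {m' mΩ : MeasurableSpace Ω} [StandardBorelSpace Ω]
  {hm' : m' ≤ mΩ} {μ : Measure Ω} [IsFiniteMeasure μ]

theorem CondIndepFun.ae_indepFun_condExpKernel [MeasurableSpace β] [MeasurableSpace β']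
    [MeasurableSpace.CountableOrCountablyGenerated Ω (β × β')] {f : Ω → β} {g : Ω → β'}
    (h : CondIndepFun m' hm' f g μ) (hf : Measurable f) (hg : Measurable g) :
    ∀ᵐ ω ∂μ, IndepFun f g (condExpKernel μ m' ω) := by
  refine ae_of_ae_trim hm' ?_
  filter_upwards [(condIndepFun_iff_map_prod_eq_prod_map_map hf hg).1 h] with ω hω
  rw [indepFun_iff_map_prod_eq_prod_map_map hf.aemeasurable hg.aemeasurable]
  simpa [Kernel.map_apply _ hf, Kernel.map_apply _ hg, Kernel.map_apply _ (hf.prodMk hg),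
    Kernel.prod_apply] using hω

theorem CondIndepFun.condExp_mul_ae_eq {X Y : Ω → ℝ} (h : CondIndepFun m' hm' X Y μ)
    (hX : Measurable X) (hY : Measurable Y) (hXi : Integrable X μ) (hYi : Integrable Y μ)
    (hXY : Integrable (X * Y) μ) :
    μ[X * Y | m'] =ᵐ[μ] μ[X | m'] * μ[Y | m'] := by
  filter_upwards [condExp_ae_eq_integral_condExpKernel hm' hXY,
    condExp_ae_eq_integral_condExpKernel hm' hXi, condExp_ae_eq_integral_condExpKernel hm' hYi,
    h.ae_indepFun_condExpKernel hX hY] with ω hXYω hXω hYω hind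
  rw [hXYω, Pi.mul_apply, hXω, hYω]
  exact hind.integral_mul_eq_mul_integral hX.aestronglyMeasurable hY.aestronglyMeasurable

theorem CondIndepFun.setIntegral_preimage_inter_eq_setIntegral_condExp [MeasurableSpace β]
    {X : Ω → ℝ} {Z : Ω → β} (h : CondIndepFun m' hm' X Z μ) (hX : Measurable X)
    (hZ : Measurable Z) (hXi : Integrable X μ) {t : Set β} (ht : MeasurableSet t) {C : Set Ω}
    (hC : MeasurableSet[m'] C) :
    ∫ ω in Z ⁻¹' t ∩ C, X ω ∂μ = ∫ ω in Z ⁻¹' t ∩ C, (μ[X | m']) ω ∂μ := by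
  have hB : MeasurableSet (Z ⁻¹' t) := hZ ht
  have hIi : Integrable ((Z ⁻¹' t).indicator (1 : Ω → ℝ)) μ :=
    (integrable_const 1).indicator hB
  have hindI : CondIndepFun m' hm' X ((Z ⁻¹' t).indicator (1 : Ω → ℝ)) μ :=
    h.comp measurable_id (measurable_const.indicator ht)
  have hfactor : μ[(Z ⁻¹' t).indicator X | m']
      =ᵐ[μ] μ[X | m'] * μ[(Z ⁻¹' t).indicator 1 | m'] := by
    rw [← mul_indicator_one_eq_indicator]
    exact hindI.condExp_mul_ae_eq hX (measurable_const.indicator hB) hXi hIi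
      (by rw [mul_indicator_one_eq_indicator]; exact hXi.indicator hB)
  have hpull : μ[(Z ⁻¹' t).indicator (μ[X | m']) | m']
      =ᵐ[μ] μ[X | m'] * μ[(Z ⁻¹' t).indicator 1 | m'] := by
    rw [← mul_indicator_one_eq_indicator]
    exact condExp_mul_of_stronglyMeasurable_left stronglyMeasurable_condExp
      (by rw [mul_indicator_one_eq_indicator]; exact integrable_condExp.indicator hB) hIi
  calc ∫ ω in Z ⁻¹' t ∩ C, X ω ∂μ = ∫ ω in C, (Z ⁻¹' t).indicator X ω ∂μ := by
        rw [setIntegral_indicator hB, Set.inter_comm]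
    _ = ∫ ω in C, (μ[(Z ⁻¹' t).indicator X | m']) ω ∂μ :=
      (setIntegral_condExp hm' (hXi.indicator hB) hC).symm
    _ = ∫ ω in C, (μ[(Z ⁻¹' t).indicator (μ[X | m']) | m']) ω ∂μ :=
      setIntegral_congr_ae (hm' _ hC) ((hfactor.trans hpull.symm).mono fun _ h _ => h)
    _ = ∫ ω in C, (Z ⁻¹' t).indicator (μ[X | m']) ω ∂μ :=
      setIntegral_condExp hm' (integrable_condExp.indicator hB) hC
    _ = ∫ ω in Z ⁻¹' t ∩ C, (μ[X | m']) ω ∂μ := by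
        rw [setIntegral_indicator hB, Set.inter_comm]

theorem CondIndepFun.condMeanOn_preimage_inter_eq_of_condExp_ae_eq [MeasurableSpace β]
    {X Y g : Ω → ℝ} {Z : Ω → β} (h : CondIndepFun m' hm' X Z μ)
    (hX : Measurable X) (hZ : Measurable Z) (hXi : Integrable X μ)
    (hg : μ[X | m'] =ᵐ[μ] g) {t : Set β} (ht : MeasurableSet t) {C : Set Ω}
    (hC : MeasurableSet[m'] C) (hY : ∀ ω ∈ Z ⁻¹' t ∩ C, Y ω = X ω) :
    condMeanOn μ (Z ⁻¹' t ∩ C) Y = condMeanOn μ (Z ⁻¹' t ∩ C) g := by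
  have hA : MeasurableSet (Z ⁻¹' t ∩ C) := (hZ ht).inter (hm' _ hC)
  unfold condMeanOn
  congr 1
  calc ∫ ω in Z ⁻¹' t ∩ C, Y ω ∂μ = ∫ ω in Z ⁻¹' t ∩ C, X ω ∂μ :=
        setIntegral_congr_fun hA hY
    _ = ∫ ω in Z ⁻¹' t ∩ C, (μ[X | m']) ω ∂μ :=
      h.setIntegral_preimage_inter_eq_setIntegral_condExp hX hZ hXi ht hC
    _ = ∫ ω in Z ⁻¹' t ∩ C, g ω ∂μ := setIntegral_congr_ae hA (hg.mono fun _ h _ => h)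

end ProbabilityTheory

theorem diffEffect_identity_general
    {Ω : Type*} [mΩ : MeasurableSpace Ω] [StandardBorelSpace Ω]
    (μ : Measure Ω) [IsProbabilityMeasure μ]
    (Z1 Z2 X U Y1 Y0 Y : Ω → ℝ)
    (hZ1 : Measurable Z1)
    (hY1m : Measurable Y1) (hY0m : Measurable Y0)
    (hY1int : Integrable Y1 μ) (hY0int : Integrable Y0 μ)
    -- consistency
    (hcons : ∀ ω, Y ω = Z1 ω * Y1 ω + (1 - Z1 ω) * Y0 ω)
    (hle : sigma3 Z2 X U ≤ mΩ)
    -- unconfoundedness: {Y(1), Y(0)} ⫫ Z1 | X, Z2, U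
    (hunconf : CondIndepFun (sigma3 Z2 X U) hle (fun ω => (Y1 ω, Y0 ω)) Z1 μ)
    -- exclusion restriction for both potential outcomes
    (hexcl1 : μ[Y1 | sigma3 Z2 X U] =ᵐ[μ] μ[Y1 | sigma2 X U])
    (hexcl0 : μ[Y0 | sigma3 Z2 X U] =ᵐ[μ] μ[Y0 | sigma2 X U])
    -- positivity: P(Z1=1,Z2=0) > 0 and P(Z1=0,Z2=1) > 0
    (hA10 : 0 < μ {ω | Z1 ω = 1 ∧ Z2 ω = 0}) (hA01 : 0 < μ {ω | Z1 ω = 0 ∧ Z2 ω = 1}) :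
    condMeanOn μ {ω | Z1 ω = 1 ∧ Z2 ω = 0} Y - condMeanOn μ {ω | Z1 ω = 0 ∧ Z2 ω = 1} Y
      = (∫ ω, (Y1 ω - Y0 ω) ∂μ)
        + condMeanOn μ {ω | Z1 ω = 1 ∧ Z2 ω = 0}
            (fun ω => (μ[Y1 | sigma2 X U]) ω - ∫ ω', Y1 ω' ∂μ)
        - condMeanOn μ {ω | Z1 ω = 0 ∧ Z2 ω = 1}
            (fun ω => (μ[Y0 | sigma2 X U]) ω - ∫ ω', Y0 ω' ∂μ) := by
  have hZ2meas (b : ℝ) : MeasurableSet[sigma3 Z2 X U] (Z2 ⁻¹' {b}) :=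
    (le_sup_left.trans le_sup_left : MeasurableSpace.comap Z2 inferInstance ≤ _) _
      ⟨{b}, measurableSet_singleton b, rfl⟩
  have hind1 : CondIndepFun (sigma3 Z2 X U) hle Y1 Z1 μ :=
    hunconf.comp measurable_fst measurable_id
  have hind0 : CondIndepFun (sigma3 Z2 X U) hle Y0 Z1 μ :=
    hunconf.comp measurable_snd measurable_id
  have h10 : condMeanOn μ {ω | Z1 ω = 1 ∧ Z2 ω = 0} Y
      = condMeanOn μ {ω | Z1 ω = 1 ∧ Z2 ω = 0} μ[Y1 | sigma2 X U] :=
    hind1.condMeanOn_preimage_inter_eq_of_condExp_ae_eq hY1m hZ1 hY1int hexcl1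
      (measurableSet_singleton 1) (hZ2meas 0) fun ω hω => by
        rw [hcons, show Z1 ω = 1 from hω.1]; ring
  have h01 : condMeanOn μ {ω | Z1 ω = 0 ∧ Z2 ω = 1} Y
      = condMeanOn μ {ω | Z1 ω = 0 ∧ Z2 ω = 1} μ[Y0 | sigma2 X U] :=
    hind0.condMeanOn_preimage_inter_eq_of_condExp_ae_eq hY0m hZ1 hY0int hexcl0
      (measurableSet_singleton 0) (hZ2meas 1) fun ω hω => by
        rw [hcons, show Z1 ω = 0 from hω.1]; ring
  rw [h10, h01, condMeanOn_sub_const hA10.ne' integrable_condExp.integrableOn,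
    condMeanOn_sub_const hA01.ne' integrable_condExp.integrableOn, integral_sub hY1int hY0int]
  ring

/-- under consistency, unconfoundedness, exclusion restriction for both potential
outcomes, and positivity of the two relevant cells, the differential-effect contrast satisfies
`μ1 := E[Y|Z1=1,Z2=0] − E[Y|Z1=0,Z2=1] = τ + h(1,0) − h(0,1)`, where `τ = E[Y(1) − Y(0)]` and
`h(a,b) = E[f_a(X,U) | Z1=a, Z2=b]` with `f_a(X,U) = E[Y(a)|X,U] − E[Y(a)]`. -/
theorem diffEffect_identity
    {Ω : Type*} [mΩ : MeasurableSpace Ω] [StandardBorelSpace Ω] [Nonempty Ω]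
    (μ : Measure Ω) [IsProbabilityMeasure μ]
    (Z1 Z2 X U Y1 Y0 Y : Ω → ℝ)
    (hZ1 : Measurable Z1) (hZ2 : Measurable Z2) (hX : Measurable X) (hU : Measurable U)
    (hY1m : Measurable Y1) (hY0m : Measurable Y0)
    (hZ1bin : ∀ ω, Z1 ω = 0 ∨ Z1 ω = 1) (hZ2bin : ∀ ω, Z2 ω = 0 ∨ Z2 ω = 1)
    (hY1int : Integrable Y1 μ) (hY0int : Integrable Y0 μ)
    -- consistency
    (hcons : ∀ ω, Y ω = Z1 ω * Y1 ω + (1 - Z1 ω) * Y0 ω)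
    (hle : sigma3 Z2 X U ≤ mΩ)
    -- unconfoundedness: {Y(1), Y(0)} ⫫ Z1 | X, Z2, U
    (hunconf : CondIndepFun (sigma3 Z2 X U) hle (fun ω => (Y1 ω, Y0 ω)) Z1 μ)
    -- exclusion restriction for both potential outcomes
    (hexcl1 : μ[Y1 | sigma3 Z2 X U] =ᵐ[μ] μ[Y1 | sigma2 X U])
    (hexcl0 : μ[Y0 | sigma3 Z2 X U] =ᵐ[μ] μ[Y0 | sigma2 X U])
    -- positivity: P(Z1=1,Z2=0) > 0 and P(Z1=0,Z2=1) > 0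
    (hA10 : 0 < μ {ω | Z1 ω = 1 ∧ Z2 ω = 0}) (hA01 : 0 < μ {ω | Z1 ω = 0 ∧ Z2 ω = 1}) :
    condMeanOn μ {ω | Z1 ω = 1 ∧ Z2 ω = 0} Y - condMeanOn μ {ω | Z1 ω = 0 ∧ Z2 ω = 1} Y
      = (∫ ω, (Y1 ω - Y0 ω) ∂μ)
        + condMeanOn μ {ω | Z1 ω = 1 ∧ Z2 ω = 0}
            (fun ω => (μ[Y1 | sigma2 X U]) ω - ∫ ω', Y1 ω' ∂μ)
        - condMeanOn μ {ω | Z1 ω = 0 ∧ Z2 ω = 1}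
            (fun ω => (μ[Y0 | sigma2 X U]) ω - ∫ ω', Y0 ω' ∂μ) :=
  diffEffect_identity_general (mΩ := mΩ) μ Z1 Z2 X U Y1 Y0 Y hZ1 hY1m hY0m hY1int hY0int hcons hle
    hunconf hexcl1 hexcl0 hA10 hA01
end

section
/- Under the 2-parameter logistic model with 0 < α1 ≤ α2, a latent density g on ℝ, and a bounded nondecreasing function f : ℝ → ℝ, the posterior means h(a,b) := ∫ f(u)·P(Z1=a,Z2=b|U=u)·g(u)du / ∫ P(Z1=a,Z2=b|U=u)·g(u)du satisfy the monotone ordering h(0,0) ≤ h(1,0) ≤ h(0,1) ≤ h(1,1). -/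
open Real MeasureTheory

/-- The joint probability `P(Z1=a, Z2=b | U=u)` under the 2-parameter logistic model with
local independence. -/
noncomputable def joint2PL (α1 β1 α2 β2 : ℝ) (a b : ℝ) (u : ℝ) : ℝ :=
  exp (a * (α1 * (u - β1)) + b * (α2 * (u - β2))) /
    (1 + exp (α1 * (u - β1)) + exp (α2 * (u - β2)) + exp (α1 * (u - β1) + α2 * (u - β2)))

/-- The posterior mean `h(a,b) = ∫ f·P(Z1=a,Z2=b|U=u)·g du / ∫ P(Z1=a,Z2=b|U=u)·g du`. -/
noncomputable def posteriorMean (α1 β1 α2 β2 : ℝ) (g f : ℝ → ℝ) (a b : ℝ) : ℝ :=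
  (∫ u, f u * joint2PL α1 β1 α2 β2 a b u * g u) / (∫ u, joint2PL α1 β1 α2 β2 a b u * g u)

/-- General monotone-likelihood-ratio lemma: if `p1 u * p2 v ≤ p2 u * p1 v` for `v ≤ u`,
then the `p2`-weighted mean of a monotone `f` dominates the `p1`-weighted mean. -/
lemma ratio_mono_aux (p1 p2 f : ℝ → ℝ)
    (hmlr : ∀ u v : ℝ, v ≤ u → p1 u * p2 v ≤ p2 u * p1 v)
    (hf : Monotone f)
    (h1 : Integrable p1) (h2 : Integrable p2)
    (hf1 : Integrable (fun u => f u * p1 u)) (hf2 : Integrable (fun u => f u * p2 u))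
    (hpos1 : 0 < ∫ u, p1 u) (hpos2 : 0 < ∫ u, p2 u) :
    (∫ u, f u * p1 u) / (∫ u, p1 u) ≤ (∫ u, f u * p2 u) / (∫ u, p2 u) := by
  rw [div_le_div_iff₀ hpos1 hpos2]
  set μ := (volume : Measure ℝ).prod (volume : Measure ℝ) with hμ
  have i1 : Integrable (fun z : ℝ × ℝ => (f z.1 * p2 z.1) * p1 z.2) μ := hf2.mul_prod h1
  have i2 : Integrable (fun z : ℝ × ℝ => p2 z.1 * (f z.2 * p1 z.2)) μ := h2.mul_prod hf1
  have i3 : Integrable (fun z : ℝ × ℝ => (f z.1 * p1 z.1) * p2 z.2) μ := hf1.mul_prod h2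
  have i4 : Integrable (fun z : ℝ × ℝ => p1 z.1 * (f z.2 * p2 z.2)) μ := h1.mul_prod hf2
  have hnn : 0 ≤ ∫ z : ℝ × ℝ, (f z.1 - f z.2) * (p2 z.1 * p1 z.2 - p1 z.1 * p2 z.2) ∂μ := by
    apply integral_nonneg
    rintro ⟨u, v⟩
    simp only [Pi.zero_apply]
    rcases le_total v u with h | h
    · exact mul_nonneg (sub_nonneg.2 (hf h)) (sub_nonneg.2 (hmlr u v h))
    · have a : f u - f v ≤ 0 := sub_nonpos.2 (hf h)
      have b := hmlr v u h
      nlinarith [mul_nonneg (neg_nonneg.2 a) (sub_nonneg.2 b)]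
  have hexp : (∫ z : ℝ × ℝ, (f z.1 - f z.2) * (p2 z.1 * p1 z.2 - p1 z.1 * p2 z.2) ∂μ)
      = (∫ u, f u * p2 u) * (∫ u, p1 u) - (∫ u, p2 u) * (∫ u, f u * p1 u)
        - ((∫ u, f u * p1 u) * (∫ u, p2 u)) + (∫ u, p1 u) * (∫ u, f u * p2 u) := by
    have heq : (fun z : ℝ × ℝ => (f z.1 - f z.2) * (p2 z.1 * p1 z.2 - p1 z.1 * p2 z.2))
        = fun z : ℝ × ℝ => (f z.1 * p2 z.1) * p1 z.2 - p2 z.1 * (f z.2 * p1 z.2)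
          - (f z.1 * p1 z.1) * p2 z.2 + p1 z.1 * (f z.2 * p2 z.2) := by
      funext z; ring
    have isub1 : Integrable (fun z : ℝ × ℝ =>
        (f z.1 * p2 z.1) * p1 z.2 - p2 z.1 * (f z.2 * p1 z.2)) μ := i1.sub i2
    have isub2 : Integrable (fun z : ℝ × ℝ =>
        (f z.1 * p2 z.1) * p1 z.2 - p2 z.1 * (f z.2 * p1 z.2)
          - (f z.1 * p1 z.1) * p2 z.2) μ := isub1.sub i3
    rw [heq, integral_add isub2 i4, integral_sub isub1 i3, integral_sub i1 i2]
    simp only [hμ]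
    rw [integral_prod_mul (fun x => f x * p2 x) p1, integral_prod_mul p2 (fun x => f x * p1 x),
      integral_prod_mul (fun x => f x * p1 x) p2, integral_prod_mul p1 (fun x => f x * p2 x)]
  rw [hexp] at hnn
  have c1 : (∫ u, p2 u) * (∫ u, f u * p1 u) = (∫ u, f u * p1 u) * (∫ u, p2 u) := mul_comm _ _
  have c2 : (∫ u, p1 u) * (∫ u, f u * p2 u) = (∫ u, f u * p2 u) * (∫ u, p1 u) := mul_comm _ _
  linarith

/-- MLR property for the 2PL joint weights. -/
lemma joint2PL_mlr (α1 β1 α2 β2 : ℝ) (a1 b1 a2 b2 : ℝ) (g : ℝ → ℝ) (hg : ∀ u, 0 ≤ g u)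
    (h : ∀ u v : ℝ, v ≤ u →
      (a1 * (α1 * (u - β1)) + b1 * (α2 * (u - β2)))
        + (a2 * (α1 * (v - β1)) + b2 * (α2 * (v - β2)))
      ≤ (a2 * (α1 * (u - β1)) + b2 * (α2 * (u - β2)))
        + (a1 * (α1 * (v - β1)) + b1 * (α2 * (v - β2)))) :
    ∀ u v : ℝ, v ≤ u →
      (joint2PL α1 β1 α2 β2 a1 b1 u * g u) * (joint2PL α1 β1 α2 β2 a2 b2 v * g v)
        ≤ (joint2PL α1 β1 α2 β2 a2 b2 u * g u) * (joint2PL α1 β1 α2 β2 a1 b1 v * g v) := by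
  intro u v huv
  have hDu : 0 < 1 + exp (α1 * (u - β1)) + exp (α2 * (u - β2))
      + exp (α1 * (u - β1) + α2 * (u - β2)) := by positivity
  have hDv : 0 < 1 + exp (α1 * (v - β1)) + exp (α2 * (v - β2))
      + exp (α1 * (v - β1) + α2 * (v - β2)) := by positivity
  have key : exp (a1 * (α1 * (u - β1)) + b1 * (α2 * (u - β2)))
        * exp (a2 * (α1 * (v - β1)) + b2 * (α2 * (v - β2)))
      ≤ exp (a2 * (α1 * (u - β1)) + b2 * (α2 * (u - β2)))
        * exp (a1 * (α1 * (v - β1)) + b1 * (α2 * (v - β2))) := by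
    rw [← exp_add, ← exp_add]
    exact exp_le_exp.mpr (h u v huv)
  have hq : 0 ≤ (g u * g v) / ((1 + exp (α1 * (u - β1)) + exp (α2 * (u - β2))
      + exp (α1 * (u - β1) + α2 * (u - β2))) * (1 + exp (α1 * (v - β1)) + exp (α2 * (v - β2))
      + exp (α1 * (v - β1) + α2 * (v - β2)))) := by
    have := hg u; have := hg v; positivity
  have aux : ∀ x a b y c d : ℝ, (x / a * b) * (y / c * d) = (x * y) * ((b * d) / (a * c)) := by
    intro x a b y c d; ring
  simp only [joint2PL]
  rw [aux, aux]
  exact mul_le_mul_of_nonneg_right key hq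

/-- under the 2PL model with `0 < α1 ≤ α2`, a latent probability density `g`
and a bounded nondecreasing `f`, the posterior means satisfy the monotone ordering
`h(0,0) ≤ h(1,0) ≤ h(0,1) ≤ h(1,1)`. -/
theorem twoPL_posterior_mean_monotone
    (α1 α2 β1 β2 : ℝ) (hα1 : 0 < α1) (hα12 : α1 ≤ α2) (g f : ℝ → ℝ)
    (hg0 : ∀ u, 0 ≤ g u) (hgint : Integrable g) (hg1 : ∫ u, g u = 1)
    (hf : Monotone f) (hfb : ∃ C, ∀ u, |f u| ≤ C)
    (hint : ∀ a b : ℝ, Integrable (fun u => joint2PL α1 β1 α2 β2 a b u * g u) ∧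
      Integrable (fun u => f u * joint2PL α1 β1 α2 β2 a b u * g u))
    (hpos : ∀ a b : ℝ, (a = 0 ∨ a = 1) → (b = 0 ∨ b = 1) →
      0 < ∫ u, joint2PL α1 β1 α2 β2 a b u * g u) :
    posteriorMean α1 β1 α2 β2 g f 0 0 ≤ posteriorMean α1 β1 α2 β2 g f 1 0 ∧
    posteriorMean α1 β1 α2 β2 g f 1 0 ≤ posteriorMean α1 β1 α2 β2 g f 0 1 ∧
    posteriorMean α1 β1 α2 β2 g f 0 1 ≤ posteriorMean α1 β1 α2 β2 g f 1 1 := by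
  have step : ∀ a1 b1 a2 b2 : ℝ, (a1 = 0 ∨ a1 = 1) → (b1 = 0 ∨ b1 = 1) →
      (a2 = 0 ∨ a2 = 1) → (b2 = 0 ∨ b2 = 1) →
      (∀ u v : ℝ, v ≤ u →
        (a1 * (α1 * (u - β1)) + b1 * (α2 * (u - β2)))
          + (a2 * (α1 * (v - β1)) + b2 * (α2 * (v - β2)))
        ≤ (a2 * (α1 * (u - β1)) + b2 * (α2 * (u - β2)))
          + (a1 * (α1 * (v - β1)) + b1 * (α2 * (v - β2)))) →
      posteriorMean α1 β1 α2 β2 g f a1 b1 ≤ posteriorMean α1 β1 α2 β2 g f a2 b2 := by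
    intro a1 b1 a2 b2 ha1 hb1 ha2 hb2 hlin
    have key := ratio_mono_aux (fun u => joint2PL α1 β1 α2 β2 a1 b1 u * g u)
      (fun u => joint2PL α1 β1 α2 β2 a2 b2 u * g u) f
      (joint2PL_mlr α1 β1 α2 β2 a1 b1 a2 b2 g hg0 hlin) hf
      (hint a1 b1).1 (hint a2 b2).1
      (by simpa only [mul_assoc] using (hint a1 b1).2)
      (by simpa only [mul_assoc] using (hint a2 b2).2)
      (hpos a1 b1 ha1 hb1) (hpos a2 b2 ha2 hb2)
    simpa only [posteriorMean, mul_assoc] using key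
  refine ⟨step 0 0 1 0 (Or.inl rfl) (Or.inl rfl) (Or.inr rfl) (Or.inl rfl) ?_,
    step 1 0 0 1 (Or.inr rfl) (Or.inl rfl) (Or.inl rfl) (Or.inr rfl) ?_,
    step 0 1 1 1 (Or.inl rfl) (Or.inr rfl) (Or.inr rfl) (Or.inr rfl) ?_⟩
  · intro u v huv; nlinarith [mul_nonneg hα1.le (sub_nonneg.2 huv)]
  · intro u v huv; nlinarith [mul_nonneg (sub_nonneg.2 hα12) (sub_nonneg.2 huv)]
  · intro u v huv; nlinarith [mul_nonneg hα1.le (sub_nonneg.2 huv)]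
end

section
/- Conditional version of the differential-effect identity: under consistency, unconfoundedness given (X, Z2, U), and exclusion restriction, for (almost every) x with P(Z1=1,Z2=0|X=x) > 0 and P(Z1=0,Z2=1|X=x) > 0: μ1(x) := E[Y|Z1=1,Z2=0,X=x] − E[Y|Z1=0,Z2=1,X=x] = τ(x) + h(1,0,x) − h(0,1,x), where τ(x) = E[Y(1)−Y(0)|X=x] and h(a,b,x) = E[f_a(X,U)|Z1=a,Z2=b,X=x] with f_a(X,U) = E[Y(a)|X,U] − E[Y(a)|X]. -/
/-!
On the cell `B ∩ {Z1 = a}`, `B = {Z2 = b, X = x}`, consistency turns `Y` into `Y(a)`. The set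
`B` lies in `σ(Z2, X, U)`, and conditional independence of `Y(a)` and `Z1` given
that σ-algebra lets one replace `Y(a)` by `E[Y(a) | Z2, X, U]` inside the integral over the cell;
by the exclusion restriction this is `E[Y(a) | X, U]`. The replacement itself works because
`1_{B ∩ {Z1 = a}} - 1_B P(Z1 = a | Z2, X, U)` integrates to zero over every
`σ(Y(a))`-measurable set, hence is orthogonal to `Y(a)`. Finally `E[Y(a) | X]` is constant on
the fibre `{X = x}`, so its mean over any non-null part of the fibre is `E[Y(a) | X = x]`, and
the identity is bookkeeping.
-/

open MeasureTheory ProbabilityTheory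

section CondMeanOn

variable {Ω : Type*} [MeasurableSpace Ω] {μ : Measure Ω} {S : Set Ω} {f g : Ω → ℝ}

lemma condMeanOn_sub (hf : IntegrableOn f S μ) (hg : IntegrableOn g S μ) :
    condMeanOn μ S (fun ω ↦ f ω - g ω) = condMeanOn μ S f - condMeanOn μ S g := by
  rw [condMeanOn, condMeanOn, condMeanOn, integral_sub hf hg, sub_div]

lemma condMeanOn_congr (h : ∫ ω in S, f ω ∂μ = ∫ ω in S, g ω ∂μ) :
    condMeanOn μ S f = condMeanOn μ S g := by
  rw [condMeanOn, condMeanOn, h]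

lemma condMeanOn_eq_of_ae_eq_const [IsFiniteMeasure μ] (hS : μ S ≠ 0) {c : ℝ}
    (hf : ∀ᵐ ω ∂μ.restrict S, f ω = c) : condMeanOn μ S f = c := by
  have hS' : (μ S).toReal ≠ 0 := ENNReal.toReal_ne_zero.2 ⟨hS, measure_ne_top μ S⟩
  rw [condMeanOn, integral_congr_ae hf, setIntegral_const, smul_eq_mul, Measure.real,
    mul_div_cancel_left₀ c hS']

lemma condMeanOn_condExp_comap [IsFiniteMeasure μ] {β : Type*} [MeasurableSpace β]
    [MeasurableSingletonClass β] {X : Ω → β} (hX : Measurable X) (hf : Integrable f μ) {x : β}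
    (hS : S ⊆ {ω | X ω = x}) (hμS : μ S ≠ 0) :
    condMeanOn μ S (μ[f | MeasurableSpace.comap X inferInstance])
      = condMeanOn μ {ω | X ω = x} f := by
  have hXx : MeasurableSet[MeasurableSpace.comap X inferInstance] {ω | X ω = x} :=
    ⟨{x}, measurableSet_singleton x, rfl⟩
  obtain ⟨ω₀, hω₀⟩ := nonempty_of_measure_ne_zero hμS
  have hconst : ∀ᵐ ω ∂μ.restrict {ω | X ω = x},
      (μ[f | MeasurableSpace.comap X inferInstance]) ω
        = (μ[f | MeasurableSpace.comap X inferInstance]) ω₀ :=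
    ae_restrict_of_forall_mem (hX.comap_le _ hXx) fun ω hω ↦
      stronglyMeasurable_condExp.factorsThrough ((hω : X ω = x).trans (hS hω₀).symm)
  rw [condMeanOn_eq_of_ae_eq_const hμS (ae_restrict_of_ae_restrict_of_subset hS hconst),
    ← condMeanOn_eq_of_ae_eq_const (measure_mono_null hS |>.mt hμS) hconst]
  exact condMeanOn_congr (setIntegral_condExp hX.comap_le hf hXx)

end CondMeanOn

section CondExp

variable {Ω : Type*} {m mΩ : MeasurableSpace Ω} {μ : Measure Ω} [IsFiniteMeasure μ]
  {f g : Ω → ℝ} {s : Set Ω}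

theorem setIntegral_condExp_mul_condExp (hm : m ≤ mΩ) (hs : MeasurableSet[m] s)
    (hfg : Integrable (μ[f|m] * g) μ) (hg : Integrable g μ) :
    ∫ ω in s, (μ[f|m] * μ[g|m]) ω ∂μ = ∫ ω in s, (μ[f|m] * g) ω ∂μ := by
  rw [← setIntegral_condExp hm hfg hs]
  exact integral_congr_ae (ae_restrict_of_ae
    (condExp_mul_of_stronglyMeasurable_left stronglyMeasurable_condExp hfg hg).symm)

theorem setIntegral_condExp_mul_eq_setIntegral_mul_condExp (hm : m ≤ mΩ) (hs : MeasurableSet[m] s)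
    (hf : Integrable f μ) (hg : Integrable g μ)
    (hfg : Integrable (μ[f|m] * g) μ) (hgf : Integrable (μ[g|m] * f) μ) :
    ∫ ω in s, (μ[f|m] * g) ω ∂μ = ∫ ω in s, (f * μ[g|m]) ω ∂μ := by
  rw [← setIntegral_condExp_mul_condExp hm hs hfg hg, mul_comm f,
    ← setIntegral_condExp_mul_condExp hm hs hgf hf, mul_comm]

theorem integral_mul_eq_of_forall_setIntegral_eq (hm : m ≤ mΩ) {h : Ω → ℝ}
    (hf : StronglyMeasurable[m] f) (hg : Integrable g μ) (hh : Integrable h μ)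
    (hfg : Integrable (f * g) μ) (hfh : Integrable (f * h) μ)
    (hgh : ∀ s, MeasurableSet[m] s → ∫ ω in s, g ω ∂μ = ∫ ω in s, h ω ∂μ) :
    ∫ ω, (f * g) ω ∂μ = ∫ ω, (f * h) ω ∂μ := by
  have hcond : μ[h|m] =ᵐ[μ] μ[g|m] :=
    ae_eq_condExp_of_forall_setIntegral_eq hm hg (fun _ _ _ ↦ integrable_condExp.integrableOn)
      (fun s hs _ ↦ by rw [setIntegral_condExp hm hh hs, hgh s hs])
      stronglyMeasurable_condExp.aestronglyMeasurable
  calc ∫ ω, (f * g) ω ∂μ = ∫ ω, (μ[f * g|m]) ω ∂μ := (integral_condExp hm).symm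
    _ = ∫ ω, (f * μ[g|m]) ω ∂μ :=
      integral_congr_ae (condExp_mul_of_stronglyMeasurable_left hf hfg hg)
    _ = ∫ ω, (f * μ[h|m]) ω ∂μ := integral_congr_ae hcond.symm.mul_left
    _ = ∫ ω, (μ[f * h|m]) ω ∂μ :=
      integral_congr_ae (condExp_mul_of_stronglyMeasurable_left hf hfh hh).symm
    _ = ∫ ω, (f * h) ω ∂μ := integral_condExp hm

end CondExp

lemma Set.mul_indicator_one {Ω : Type*} (f : Ω → ℝ) (S : Set Ω) :
    f * S.indicator (fun _ ↦ (1 : ℝ)) = S.indicator f := by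
  ext ω
  by_cases hω : ω ∈ S <;> simp [hω]

lemma norm_condExp_indicator_one_le {Ω : Type*} {m mΩ : MeasurableSpace Ω} {μ : Measure Ω}
    (T : Set Ω) : ∀ᵐ ω ∂μ, ‖(μ⟦T | m⟧) ω‖ ≤ 1 := by
  have := ae_bdd_abs_condExp_of_ae_bdd_abs (m := m) (μ := μ) (R := (1 : ℝ))
    (f := T.indicator fun _ ↦ (1 : ℝ)) (ae_of_all _ fun ω ↦ ?_)
  · simpa using this
  by_cases hω : ω ∈ T <;> simp [hω]

section CondIndep

variable {Ω β : Type*} {m' mΩ : MeasurableSpace Ω} [StandardBorelSpace Ω] [MeasurableSpace β]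
  {μ : Measure Ω} [IsFiniteMeasure μ] {hm' : m' ≤ mΩ} {V : Ω → ℝ} {W : Ω → β}
  {B : Set Ω} {t : Set β}

theorem ProbabilityTheory.CondIndepFun.setIntegral_inter_preimage_eq_setIntegral_mul_condExp
    (hV : Measurable V) (hW : Measurable W) (hVint : Integrable V μ)
    (hVW : CondIndepFun m' hm' V W μ) (hB : MeasurableSet[m'] B) (ht : MeasurableSet t) :
    ∫ ω in B ∩ W ⁻¹' t, V ω ∂μ = ∫ ω in B, (V * μ⟦W ⁻¹' t | m'⟧) ω ∂μ := by
  set T := W ⁻¹' t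
  have hT : MeasurableSet T := hW ht
  have hmV : MeasurableSpace.comap V inferInstance ≤ mΩ := hV.comap_le
  have hT_int : Integrable (T.indicator fun _ ↦ (1 : ℝ)) μ := (integrable_const 1).indicator hT
  rw [← setIntegral_indicator hT, ← Set.mul_indicator_one]
  refine integral_mul_eq_of_forall_setIntegral_eq (μ := μ.restrict B) hmV
    (comap_measurable V).stronglyMeasurable hT_int.restrict integrable_condExp.restrict
    ?_ ?_ fun S hS ↦ ?_
  · rw [Set.mul_indicator_one]
    exact (hVint.indicator hT).restrict
  · exact (hVint.mul_bdd (stronglyMeasurable_condExp.mono hm').aestronglyMeasurable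
      (norm_condExp_indicator_one_le T)).restrict
  have hS_int : Integrable (S.indicator fun _ ↦ (1 : ℝ)) μ :=
    (integrable_const 1).indicator (hmV S hS)
  have hprod := (condIndepFun_iff _ _ _ _ hV hW μ).1 hVW S T hS ⟨t, ht, rfl⟩
  calc ∫ ω in S, T.indicator (fun _ ↦ (1 : ℝ)) ω ∂μ.restrict B
      = ∫ ω in B, (μ⟦S ∩ T | m'⟧) ω ∂μ := by
        rw [setIntegral_condExp hm' ((integrable_const 1).indicator ((hmV S hS).inter hT)) hB,
          ← integral_indicator (hmV S hS), Set.indicator_indicator]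
    _ = ∫ ω in B, (μ⟦T | m'⟧ * μ⟦S | m'⟧) ω ∂μ := by
        refine integral_congr_ae (ae_restrict_of_ae ?_)
        filter_upwards [hprod] with ω hω
        rw [hω, Pi.mul_apply, Pi.mul_apply, mul_comm]
    _ = ∫ ω in B, (μ⟦T | m'⟧ * S.indicator fun _ ↦ (1 : ℝ)) ω ∂μ := by
        refine setIntegral_condExp_mul_condExp hm' hB ?_ hS_int
        rw [Set.mul_indicator_one]
        exact integrable_condExp.indicator (hmV S hS)
    _ = ∫ ω in S, (μ⟦T | m'⟧) ω ∂μ.restrict B := by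
        rw [Set.mul_indicator_one, integral_indicator (hmV S hS)]

theorem ProbabilityTheory.CondIndepFun.setIntegral_inter_preimage_condExp (hV : Measurable V)
    (hW : Measurable W) (hVint : Integrable V μ) (hVW : CondIndepFun m' hm' V W μ)
    (hB : MeasurableSet[m'] B) (ht : MeasurableSet t) :
    ∫ ω in B ∩ W ⁻¹' t, V ω ∂μ = ∫ ω in B ∩ W ⁻¹' t, (μ[V|m']) ω ∂μ := by
  have hT : MeasurableSet (W ⁻¹' t) := hW ht
  have hT_int : Integrable ((W ⁻¹' t).indicator fun _ ↦ (1 : ℝ)) μ :=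
    (integrable_const 1).indicator hT
  rw [hVW.setIntegral_inter_preimage_eq_setIntegral_mul_condExp hV hW hVint hB ht,
    ← setIntegral_condExp_mul_eq_setIntegral_mul_condExp hm' hB hVint hT_int,
    Set.mul_indicator_one, setIntegral_indicator hT]
  · rw [Set.mul_indicator_one]
    exact integrable_condExp.indicator hT
  · exact hVint.bdd_mul (stronglyMeasurable_condExp.mono hm').aestronglyMeasurable
      (norm_condExp_indicator_one_le _)

end CondIndep

section Cell

variable {Ω : Type*} [mΩ : MeasurableSpace Ω] [StandardBorelSpace Ω] {μ : Measure Ω}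
  [IsFiniteMeasure μ]

lemma condMeanOn_cell_eq_condMeanOn_condExp {Z1 Z2 X U Ya Y : Ω → ℝ} {a b x : ℝ}
    (hZ1 : Measurable Z1) (hYa : Measurable Ya) (hYa_int : Integrable Ya μ)
    (hY : ∀ ω, Z1 ω = a → Y ω = Ya ω) (hle : sigma3 Z2 X U ≤ mΩ)
    (hind : CondIndepFun (sigma3 Z2 X U) hle Ya Z1 μ)
    (hexcl : μ[Ya | sigma3 Z2 X U] =ᵐ[μ] μ[Ya | sigma2 X U]) :
    condMeanOn μ {ω | Z1 ω = a ∧ Z2 ω = b ∧ X ω = x} Y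
      = condMeanOn μ {ω | Z1 ω = a ∧ Z2 ω = b ∧ X ω = x} (μ[Ya | sigma2 X U]) := by
  have hB : MeasurableSet[sigma3 Z2 X U] {ω | Z2 ω = b ∧ X ω = x} := by
    refine MeasurableSet.inter ?_ ?_
    · exact (le_sup_left.trans le_sup_left : MeasurableSpace.comap Z2 inferInstance ≤ _) _
        ⟨{b}, measurableSet_singleton b, rfl⟩
    · exact (le_sup_right.trans le_sup_left : MeasurableSpace.comap X inferInstance ≤ _) _
        ⟨{x}, measurableSet_singleton x, rfl⟩
  have hcell : {ω | Z1 ω = a ∧ Z2 ω = b ∧ X ω = x}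
      = {ω | Z2 ω = b ∧ X ω = x} ∩ Z1 ⁻¹' {a} := by
    ext ω
    simp only [Set.mem_ofPred_eq, Set.mem_inter_iff, Set.mem_preimage, Set.mem_singleton_iff]
    tauto
  have hcell_meas : MeasurableSet {ω | Z1 ω = a ∧ Z2 ω = b ∧ X ω = x} :=
    hcell ▸ (hle _ hB).inter (hZ1 (measurableSet_singleton a))
  refine condMeanOn_congr ?_
  calc ∫ ω in {ω | Z1 ω = a ∧ Z2 ω = b ∧ X ω = x}, Y ω ∂μ
      = ∫ ω in {ω | Z2 ω = b ∧ X ω = x} ∩ Z1 ⁻¹' {a}, Ya ω ∂μ := by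
        rw [setIntegral_congr_fun hcell_meas fun ω hω ↦ hY ω hω.1, hcell]
    _ = ∫ ω in {ω | Z2 ω = b ∧ X ω = x} ∩ Z1 ⁻¹' {a}, (μ[Ya | sigma3 Z2 X U]) ω ∂μ :=
        hind.setIntegral_inter_preimage_condExp hYa hZ1 hYa_int hB (measurableSet_singleton a)
    _ = ∫ ω in {ω | Z1 ω = a ∧ Z2 ω = b ∧ X ω = x}, (μ[Ya | sigma2 X U]) ω ∂μ := by
        rw [hcell]
        exact integral_congr_ae (ae_restrict_of_ae hexcl)

end Cell

theorem diffEffect_conditional_identity_general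
    {Ω : Type*} [mΩ : MeasurableSpace Ω] [StandardBorelSpace Ω]
    (μ : Measure Ω) [IsProbabilityMeasure μ]
    (Z1 Z2 X U Y1 Y0 Y : Ω → ℝ) (x : ℝ)
    (hZ1 : Measurable Z1) (hX : Measurable X)
    (hY1m : Measurable Y1) (hY0m : Measurable Y0)
    (hY1int : Integrable Y1 μ) (hY0int : Integrable Y0 μ)
    -- consistency
    (hcons : ∀ ω, Y ω = Z1 ω * Y1 ω + (1 - Z1 ω) * Y0 ω)
    (hle : sigma3 Z2 X U ≤ mΩ)
    -- unconfoundedness: {Y(1), Y(0)} ⫫ Z1 | X, Z2, U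
    (hunconf : CondIndepFun (sigma3 Z2 X U) hle (fun ω => (Y1 ω, Y0 ω)) Z1 μ)
    -- exclusion restriction for both potential outcomes
    (hexcl1 : μ[Y1 | sigma3 Z2 X U] =ᵐ[μ] μ[Y1 | sigma2 X U])
    (hexcl0 : μ[Y0 | sigma3 Z2 X U] =ᵐ[μ] μ[Y0 | sigma2 X U])
    -- positive conditional cell probabilities at X = x
    (hA10 : 0 < μ {ω | Z1 ω = 1 ∧ Z2 ω = 0 ∧ X ω = x})
    (hA01 : 0 < μ {ω | Z1 ω = 0 ∧ Z2 ω = 1 ∧ X ω = x}) :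
    condMeanOn μ {ω | Z1 ω = 1 ∧ Z2 ω = 0 ∧ X ω = x} Y
      - condMeanOn μ {ω | Z1 ω = 0 ∧ Z2 ω = 1 ∧ X ω = x} Y
      = condMeanOn μ {ω | X ω = x} (fun ω => Y1 ω - Y0 ω)
        + condMeanOn μ {ω | Z1 ω = 1 ∧ Z2 ω = 0 ∧ X ω = x}
            (fun ω => (μ[Y1 | sigma2 X U]) ω
              - (μ[Y1 | MeasurableSpace.comap X inferInstance]) ω)
        - condMeanOn μ {ω | Z1 ω = 0 ∧ Z2 ω = 1 ∧ X ω = x}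
            (fun ω => (μ[Y0 | sigma2 X U]) ω
              - (μ[Y0 | MeasurableSpace.comap X inferInstance]) ω) := by
  have hY_of_treated : ∀ ω, Z1 ω = 1 → Y ω = Y1 ω := fun ω h ↦ by rw [hcons, h]; ring
  have hY_of_control : ∀ ω, Z1 ω = 0 → Y ω = Y0 ω := fun ω h ↦ by rw [hcons, h]; ring
  rw [condMeanOn_cell_eq_condMeanOn_condExp hZ1 hY1m hY1int hY_of_treated hle
      (hunconf.comp measurable_fst measurable_id) hexcl1,
    condMeanOn_cell_eq_condMeanOn_condExp hZ1 hY0m hY0int hY_of_control hle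
      (hunconf.comp measurable_snd measurable_id) hexcl0,
    condMeanOn_sub hY1int.integrableOn hY0int.integrableOn,
    condMeanOn_sub integrable_condExp.integrableOn integrable_condExp.integrableOn,
    condMeanOn_sub integrable_condExp.integrableOn integrable_condExp.integrableOn,
    condMeanOn_condExp_comap hX hY1int (fun ω h ↦ h.2.2) hA10.ne',
    condMeanOn_condExp_comap hX hY0int (fun ω h ↦ h.2.2) hA01.ne']
  ring

/-- conditional differential-effect identity: under consistency,
unconfoundedness given `(X, Z2, U)` and the exclusion restriction, for a fixed `x` whose
relevant cells have positive probability,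
`μ1(x) := E[Y|Z1=1,Z2=0,X=x] − E[Y|Z1=0,Z2=1,X=x] = τ(x) + h(1,0,x) − h(0,1,x)`,
where `τ(x) = E[Y(1)−Y(0)|X=x]` and `h(a,b,x) = E[f_a(X,U)|Z1=a,Z2=b,X=x]` with
`f_a(X,U) = E[Y(a)|X,U] − E[Y(a)|X]`. -/
theorem diffEffect_conditional_identity
    {Ω : Type*} [mΩ : MeasurableSpace Ω] [StandardBorelSpace Ω] [Nonempty Ω]
    (μ : Measure Ω) [IsProbabilityMeasure μ]
    (Z1 Z2 X U Y1 Y0 Y : Ω → ℝ) (x : ℝ)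
    (hZ1 : Measurable Z1) (hZ2 : Measurable Z2) (hX : Measurable X) (hU : Measurable U)
    (hY1m : Measurable Y1) (hY0m : Measurable Y0)
    (hZ1bin : ∀ ω, Z1 ω = 0 ∨ Z1 ω = 1) (hZ2bin : ∀ ω, Z2 ω = 0 ∨ Z2 ω = 1)
    (hY1int : Integrable Y1 μ) (hY0int : Integrable Y0 μ)
    -- consistency
    (hcons : ∀ ω, Y ω = Z1 ω * Y1 ω + (1 - Z1 ω) * Y0 ω)
    (hle : sigma3 Z2 X U ≤ mΩ)
    -- unconfoundedness: {Y(1), Y(0)} ⫫ Z1 | X, Z2, U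
    (hunconf : CondIndepFun (sigma3 Z2 X U) hle (fun ω => (Y1 ω, Y0 ω)) Z1 μ)
    -- exclusion restriction for both potential outcomes
    (hexcl1 : μ[Y1 | sigma3 Z2 X U] =ᵐ[μ] μ[Y1 | sigma2 X U])
    (hexcl0 : μ[Y0 | sigma3 Z2 X U] =ᵐ[μ] μ[Y0 | sigma2 X U])
    -- positive conditional cell probabilities at X = x
    (hx : 0 < μ {ω | X ω = x})
    (hA10 : 0 < μ {ω | Z1 ω = 1 ∧ Z2 ω = 0 ∧ X ω = x})
    (hA01 : 0 < μ {ω | Z1 ω = 0 ∧ Z2 ω = 1 ∧ X ω = x}) :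
    condMeanOn μ {ω | Z1 ω = 1 ∧ Z2 ω = 0 ∧ X ω = x} Y
      - condMeanOn μ {ω | Z1 ω = 0 ∧ Z2 ω = 1 ∧ X ω = x} Y
      = condMeanOn μ {ω | X ω = x} (fun ω => Y1 ω - Y0 ω)
        + condMeanOn μ {ω | Z1 ω = 1 ∧ Z2 ω = 0 ∧ X ω = x}
            (fun ω => (μ[Y1 | sigma2 X U]) ω
              - (μ[Y1 | MeasurableSpace.comap X inferInstance]) ω)
        - condMeanOn μ {ω | Z1 ω = 0 ∧ Z2 ω = 1 ∧ X ω = x}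
            (fun ω => (μ[Y0 | sigma2 X U]) ω
              - (μ[Y0 | MeasurableSpace.comap X inferInstance]) ω) :=
  diffEffect_conditional_identity_general (mΩ := mΩ) μ Z1 Z2 X U Y1 Y0 Y x hZ1 hX hY1m hY0m hY1int
    hY0int hcons hle hunconf hexcl1 hexcl0 hA10 hA01
end
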